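/- Let S ∈ ℝ^{m×n}, x_0 ∈ ℝ^d, and define the PCG iteration: r_0 = b − Hx_0, r̃_0 = H_S⁻¹r_0, p_0 = r̃_0, δ̃_0 = r_0ᵀr̃_0; and for t ≥ 0, α_t = δ̃_t/(p_tᵀHp_t), x_{t+1} = x_t + α_t p_t, r_{t+1} = r_t − α_t H p_t, r̃_{t+1} = H_S⁻¹r_{t+1}, δ̃_{t+1} = r_{t+1}ᵀr̃_{t+1}, p_{t+1} = r̃_{t+1} + (δ̃_{t+1}/δ̃_t) p_t. Fix T ≥ 1 and assume δ̃_s ≠ 0 and p_sᵀHp_s ≠ 0 for all s < T (so the iteration is well-defined up to time T). Then for all t ≤ T: (i) x_t − x_0 ∈ H_S⁻¹ · span{∇f(x_0), …, ∇f(x_{t−1})}; and (ii) δ_{x_t} equals (1/2) · min over real polynomials Q of degree at most t with Q(0)=1 of Σ_{i=1}^d Q(1/λ_i)² ξ_i², where C_S = Σ_i λ_i v_i v_iᵀ is an eigenvalue decomposition of C_S and ξ_i = ⟨v_i, H^{1/2}(x_0 − x*)⟩. -/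

import Mathlib

open Matrix MeasureTheory ProbabilityTheory Real Polynomial
open scoped Classical

noncomputable section

/-- Spectral (operator) norm of a real matrix, via its action on Euclidean space. -/
def spectralNorm' {k l : ℕ} (M : Matrix (Fin k) (Fin l) ℝ) : ℝ :=
  ‖LinearMap.toContinuousLinearMap (Matrix.toEuclideanLin M)‖

/-- Positive semidefinite square root of a matrix (junk value `0` if `M` is not
positive semidefinite). -/
def msqrt {d : ℕ} (M : Matrix (Fin d) (Fin d) ℝ) : Matrix (Fin d) (Fin d) ℝ :=
  if h : M.PosSemidef then
    (h.1.eigenvectorUnitary : Matrix (Fin d) (Fin d) ℝ) *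
      diagonal ((↑) ∘ (Real.sqrt ·) ∘ h.1.eigenvalues) *
      (star h.1.eigenvectorUnitary : Matrix (Fin d) (Fin d) ℝ) else 0

/-- The Hessian `H = Aᵀ A + ν² Λ`. -/
def Hmat {n d : ℕ} (A : Matrix (Fin n) (Fin d) ℝ) (ν : ℝ)
    (Λ : Matrix (Fin d) (Fin d) ℝ) : Matrix (Fin d) (Fin d) ℝ :=
  Aᵀ * A + ν ^ 2 • Λ

/-- The sketched Hessian `H_S = Aᵀ Sᵀ S A + ν² Λ`. -/
def HSmat {n d m : ℕ} (A : Matrix (Fin n) (Fin d) ℝ) (ν : ℝ)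
    (Λ : Matrix (Fin d) (Fin d) ℝ) (S : Matrix (Fin m) (Fin n) ℝ) :
    Matrix (Fin d) (Fin d) ℝ :=
  Aᵀ * Sᵀ * S * A + ν ^ 2 • Λ

/-- `C_S = H^{-1/2} H_S H^{-1/2}`. -/
def CSmat {n d m : ℕ} (A : Matrix (Fin n) (Fin d) ℝ) (ν : ℝ)
    (Λ : Matrix (Fin d) (Fin d) ℝ) (S : Matrix (Fin m) (Fin n) ℝ) :
    Matrix (Fin d) (Fin d) ℝ :=
  (msqrt (Hmat A ν Λ))⁻¹ * HSmat A ν Λ S * (msqrt (Hmat A ν Λ))⁻¹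

/-- The minimizer `x* = H⁻¹ b`. -/
def xstar {n d : ℕ} (A : Matrix (Fin n) (Fin d) ℝ) (ν : ℝ)
    (Λ : Matrix (Fin d) (Fin d) ℝ) (b : Fin d → ℝ) : Fin d → ℝ :=
  (Hmat A ν Λ)⁻¹.mulVec b

/-- The gradient `∇f(x) = H x - b`. -/
def gradf {n d : ℕ} (A : Matrix (Fin n) (Fin d) ℝ) (ν : ℝ)
    (Λ : Matrix (Fin d) (Fin d) ℝ) (b : Fin d → ℝ) (x : Fin d → ℝ) : Fin d → ℝ :=
  (Hmat A ν Λ).mulVec x - b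

/-- The exact error `δ_x = (1/2)(x - x*)ᵀ H (x - x*)`. -/
def deltaEx {n d : ℕ} (A : Matrix (Fin n) (Fin d) ℝ) (ν : ℝ)
    (Λ : Matrix (Fin d) (Fin d) ℝ) (b : Fin d → ℝ) (x : Fin d → ℝ) : ℝ :=
  (1 / 2) * ((x - xstar A ν Λ b) ⬝ᵥ (Hmat A ν Λ).mulVec (x - xstar A ν Λ b))

/-- The approximate Newton decrement `δ̃_x = (1/2) ∇f(x)ᵀ H_S⁻¹ ∇f(x)`. -/
def deltaApx {n d m : ℕ} (A : Matrix (Fin n) (Fin d) ℝ) (ν : ℝ)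
    (Λ : Matrix (Fin d) (Fin d) ℝ) (b : Fin d → ℝ)
    (S : Matrix (Fin m) (Fin n) ℝ) (x : Fin d → ℝ) : ℝ :=
  (1 / 2) * (gradf A ν Λ b x ⬝ᵥ (HSmat A ν Λ S)⁻¹.mulVec (gradf A ν Λ b x))

/-!
PCG keeps each new residual orthogonal to all earlier search directions and makes the directions
`H`-conjugate. Hence the first `t` directions span the Krylov space of `H_S⁻¹ H` generated by
`H_S⁻¹ r₀`, the error `x_t - x*` is `Q(H_S⁻¹ H)(x₀ - x*)` for some `Q` with `deg Q ≤ t` and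
`Q(0) = 1`, and since `H (x_t - x*) = -r_t` is orthogonal to that space, `x_t` minimises the
`H`-energy of the error over all such `Q`. Conjugating by `R = H^{1/2}` turns `H_S⁻¹ H` into
`R H_S⁻¹ R = C_S⁻¹ = Σ λᵢ⁻¹ vᵢ vᵢᵀ`, so the energy of `Q(H_S⁻¹ H) e` is `Σ Q(1/λᵢ)² ⟨vᵢ, R e⟩²`.
Part (i) holds because every direction is `H_S⁻¹` applied to a combination of the residuals
`r_s = -∇f(x_s)`.
-/

lemma Matrix.IsSymm.mulVec_dotProduct {ι : Type*} [Fintype ι] {A : Matrix ι ι ℝ} (hA : A.IsSymm)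
    (u w : ι → ℝ) :
    A *ᵥ u ⬝ᵥ w = u ⬝ᵥ A *ᵥ w := by
  rw [dotProduct_mulVec, ← mulVec_transpose, hA.eq]

lemma SemiconjBy.aeval {R A : Type*} [CommSemiring R] [Semiring A] [Algebra R A] {a b c : A}
    (h : SemiconjBy a b c) (Q : R[X]) : SemiconjBy a (aeval b Q) (aeval c Q) := by
  induction Q using Polynomial.induction_on' with
  | add Q₁ Q₂ h₁ h₂ => simpa only [map_add] using h₁.add_right h₂
  | monomial n r =>
    simp only [aeval_monomial]
    exact SemiconjBy.mul_right (Algebra.commute_algebraMap_right r a) (h.pow_right n)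

section Spectral

variable {ι : Type*} [Fintype ι] {v : ι → ι → ℝ}

lemma dotProduct_sum_smul_vecMulVec_mulVec (c : ι → ℝ) (y : ι → ℝ) :
    y ⬝ᵥ (∑ i, c i • vecMulVec (v i) (v i)) *ᵥ y = ∑ i, c i * (v i ⬝ᵥ y) ^ 2 := by
  simp only [sum_mulVec, dotProduct_sum, smul_mulVec, dotProduct_smul, vecMulVec_mulVec]
  simp [dotProduct_comm y, sq]

variable [DecidableEq ι]

lemma sum_vecMulVec_self_eq_one (hv : ∀ i j, v i ⬝ᵥ v j = if i = j then 1 else 0) :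
    ∑ i, vecMulVec (v i) (v i) = 1 := by
  have hV : of v * (of v)ᵀ = 1 := by
    ext i j
    simpa [mul_apply, dotProduct, one_apply] using hv i j
  rw [← mul_eq_one_comm.mp hV]
  ext a b
  simp [mul_apply, Matrix.sum_apply, vecMulVec_apply]

lemma sum_smul_vecMulVec_mul (hv : ∀ i j, v i ⬝ᵥ v j = if i = j then 1 else 0) (c e : ι → ℝ) :
    (∑ i, c i • vecMulVec (v i) (v i)) * ∑ i, e i • vecMulVec (v i) (v i) =
      ∑ i, (c i * e i) • vecMulVec (v i) (v i) := by
  simp_rw [Finset.sum_mul_sum, smul_mul_smul_comm, vecMulVec_mul_vecMulVec, hv, ite_smul,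
    one_smul, zero_smul, apply_ite (vecMulVec _), vecMulVec_zero, smul_ite, smul_zero]
  simp

lemma aeval_sum_smul_vecMulVec (hv : ∀ i j, v i ⬝ᵥ v j = if i = j then 1 else 0) (c : ι → ℝ)
    (Q : ℝ[X]) :
    aeval (∑ i, c i • vecMulVec (v i) (v i)) Q = ∑ i, Q.eval (c i) • vecMulVec (v i) (v i) := by
  let f : (ι → ℝ) →ₐ[ℝ] Matrix ι ι ℝ :=
    AlgHom.ofLinearMap (Fintype.linearCombination ℝ fun i => vecMulVec (v i) (v i))
      (by simpa [Fintype.linearCombination_apply] using sum_vecMulVec_self_eq_one hv)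
      (fun c e => by simp [Fintype.linearCombination_apply, sum_smul_vecMulVec_mul hv])
  have hf : ∀ c, f c = ∑ i, c i • vecMulVec (v i) (v i) := fun c =>
    Fintype.linearCombination_apply ℝ _ c
  rw [← hf, aeval_algHom_apply, aeval_pi_apply, hf]
  rfl

lemma inv_sum_smul_vecMulVec (hv : ∀ i j, v i ⬝ᵥ v j = if i = j then 1 else 0) {c : ι → ℝ}
    (hc : ∀ i, c i ≠ 0) :
    (∑ i, c i • vecMulVec (v i) (v i))⁻¹ = ∑ i, (c i)⁻¹ • vecMulVec (v i) (v i) := by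
  refine inv_eq_right_inv ?_
  simp_rw [sum_smul_vecMulVec_mul hv, mul_inv_cancel₀ (hc _), one_smul]
  exact sum_vecMulVec_self_eq_one hv

lemma aeval_mulVec_dotProduct_eq_sum {R P H : Matrix ι ι ℝ} {c : ι → ℝ} (hRR : R * R = H)
    (hR : R.IsSymm) (hv : ∀ i j, v i ⬝ᵥ v j = if i = j then 1 else 0)
    (hRPR : R * P * R = ∑ i, c i • vecMulVec (v i) (v i)) (Q : ℝ[X]) (e : ι → ℝ) :
    aeval (P * H) Q *ᵥ e ⬝ᵥ H *ᵥ (aeval (P * H) Q *ᵥ e) =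
      ∑ i, Q.eval (c i) ^ 2 * (v i ⬝ᵥ R *ᵥ e) ^ 2 := by
  set F := ∑ i, Q.eval (c i) • vecMulVec (v i) (v i)
  have hsemi : SemiconjBy R (P * H) (R * P * R) := by
    rw [SemiconjBy, ← hRR]
    simp only [Matrix.mul_assoc]
  have hRw : R *ᵥ (aeval (P * H) Q *ᵥ e) = F *ᵥ (R *ᵥ e) := by
    rw [mulVec_mulVec, (hsemi.aeval Q).eq, hRPR, aeval_sum_smul_vecMulVec hv, ← mulVec_mulVec]
  have hF : F.IsSymm := by
    simp only [F, IsSymm, transpose_sum, transpose_smul, transpose_vecMulVec]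
  calc aeval (P * H) Q *ᵥ e ⬝ᵥ H *ᵥ (aeval (P * H) Q *ᵥ e)
      = R *ᵥ (aeval (P * H) Q *ᵥ e) ⬝ᵥ R *ᵥ (aeval (P * H) Q *ᵥ e) := by
        rw [← hRR, ← mulVec_mulVec, hR.mulVec_dotProduct]
    _ = R *ᵥ e ⬝ᵥ (F * F) *ᵥ (R *ᵥ e) := by rw [hRw, hF.mulVec_dotProduct, mulVec_mulVec]
    _ = ∑ i, Q.eval (c i) ^ 2 * (v i ⬝ᵥ R *ᵥ e) ^ 2 := by
        rw [sum_smul_vecMulVec_mul hv, dotProduct_sum_smul_vecMulVec_mulVec]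
        simp only [sq]

end Spectral

section Krylov

lemma span_image_Iio_mono {V : Type*} [AddCommMonoid V] [Module ℝ V] (f : ℕ → V) {t t' : ℕ}
    (h : t ≤ t') : Submodule.span ℝ (f '' Set.Iio t) ≤ Submodule.span ℝ (f '' Set.Iio t') :=
  Submodule.span_mono (Set.image_mono (Set.Iio_subset_Iio h))

variable {ι : Type*} [Fintype ι] [DecidableEq ι]

def krylov (M : Matrix ι ι ℝ) (z : ι → ℝ) (t : ℕ) : Submodule ℝ (ι → ℝ) :=
  Submodule.span ℝ ((fun i => (M ^ i) *ᵥ z) '' Set.Iio t)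

variable {M : Matrix ι ι ℝ} {z : ι → ℝ} {t : ℕ}

lemma pow_mulVec_mem_krylov {i : ℕ} (hi : i < t) : (M ^ i) *ᵥ z ∈ krylov M z t :=
  Submodule.subset_span (Set.mem_image_of_mem _ hi)

lemma krylov_mono {t' : ℕ} (h : t ≤ t') : krylov M z t ≤ krylov M z t' :=
  span_image_Iio_mono _ h

lemma krylov_neg : krylov M (-z) t = krylov M z t := by
  rw [krylov, krylov, ← Submodule.span_neg, ← Set.image_neg_eq_neg, Set.image_image]
  simp only [mulVec_neg, neg_neg]

lemma mulVec_mem_krylov_succ {w : ι → ℝ} (hw : w ∈ krylov M z t) :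
    M *ᵥ w ∈ krylov M z (t + 1) := by
  induction hw using Submodule.span_induction with
  | mem w hw =>
    obtain ⟨i, hi, rfl⟩ := hw
    rw [mulVec_mulVec, ← pow_succ']
    exact pow_mulVec_mem_krylov (Nat.succ_lt_succ hi)
  | zero => rw [mulVec_zero]; exact zero_mem _
  | add u w _ _ hu hw => rw [mulVec_add]; exact add_mem hu hw
  | smul c u _ hu => rw [mulVec_smul]; exact Submodule.smul_mem _ c hu

lemma aeval_mulVec_sub_mem_krylov {Q : ℝ[X]} (hQ : Q.natDegree ≤ t) (hQ0 : Q.eval 0 = 1)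
    (e : ι → ℝ) : aeval M Q *ᵥ e - e ∈ krylov M (M *ᵥ e) t := by
  rw [aeval_eq_sum_range, Finset.sum_range_succ', add_mulVec, sum_mulVec, pow_zero, smul_mulVec,
    one_mulVec, coeff_zero_eq_eval_zero, hQ0, one_smul, add_sub_cancel_right]
  refine Submodule.sum_mem _ fun i hi => ?_
  rw [smul_mulVec, pow_succ, ← mulVec_mulVec]
  exact Submodule.smul_mem _ _ (pow_mulVec_mem_krylov (by simp at hi; omega))

lemma exists_aeval_mulVec_eq_of_mem_krylov {e u : ι → ℝ} (hu : u ∈ krylov M (M *ᵥ e) t) :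
    ∃ Q : ℝ[X], Q.natDegree ≤ t ∧ Q.eval 0 = 1 ∧ aeval M Q *ᵥ e = e + u := by
  induction hu using Submodule.span_induction with
  | mem u hu =>
    obtain ⟨i, hi, rfl⟩ := hu
    refine ⟨1 + X ^ (i + 1), ?_, by simp, ?_⟩
    · refine (natDegree_add_le _ _).trans (max_le (by simp) ?_)
      simpa using Nat.succ_le_of_lt hi
    · simp [add_mulVec, pow_succ, mulVec_mulVec]
  | zero => exact ⟨1, by simp, by simp, by simp⟩
  | add u w _ _ hu hw =>
    obtain ⟨Q, hQ, hQ0, hQe⟩ := hu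
    obtain ⟨R, hR, hR0, hRe⟩ := hw
    refine ⟨Q + R - 1, ?_, by simp [hQ0, hR0], ?_⟩
    · exact (natDegree_sub_le _ _).trans
        (max_le ((natDegree_add_le _ _).trans (max_le hQ hR)) (by simp))
    · simp only [map_sub, map_add, map_one, sub_mulVec, add_mulVec, one_mulVec, hQe, hRe]
      abel
  | smul c u _ hu =>
    obtain ⟨Q, hQ, hQ0, hQe⟩ := hu
    refine ⟨c • Q + (1 - c) • 1, ?_, by simp [hQ0], ?_⟩
    · exact (natDegree_add_le _ _).trans
        (max_le ((natDegree_smul_le _ _).trans hQ) ((natDegree_smul_le _ _).trans (by simp)))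
    · simp only [map_add, map_smul, map_one, add_mulVec, smul_mulVec, one_mulVec, hQe]
      module

end Krylov

section PCG

variable {ι : Type*} [Fintype ι]

lemma dotProduct_eq_zero_of_mem_span {s : Set (ι → ℝ)} {w u : ι → ℝ}
    (hw : ∀ v ∈ s, w ⬝ᵥ v = 0) (hu : u ∈ Submodule.span ℝ s) : w ⬝ᵥ u = 0 := by
  induction hu using Submodule.span_induction with
  | mem v hv => exact hw v hv
  | zero => exact dotProduct_zero w
  | add u v _ _ hu hv => rw [dotProduct_add, hu, hv, add_zero]
  | smul c u _ hu => rw [dotProduct_smul, hu, smul_zero]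

structure IsPCG (H P : Matrix ι ι ℝ) (xs : ι → ℝ) (x r p : ℕ → ι → ℝ) (δ α : ℕ → ℝ) :
    Prop where
  residual_eq : ∀ t, r t = H *ᵥ (xs - x t)
  decrement_eq : ∀ t, δ t = r t ⬝ᵥ P *ᵥ r t
  stepSize_eq : ∀ t, α t = δ t / (p t ⬝ᵥ H *ᵥ p t)
  dir_zero : p 0 = P *ᵥ r 0
  dir_succ : ∀ t, p (t + 1) = P *ᵥ r (t + 1) + (δ (t + 1) / δ t) • p t
  iterate_succ : ∀ t, x (t + 1) = x t + α t • p t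

namespace IsPCG

variable {H P : Matrix ι ι ℝ} {xs : ι → ℝ} {x r p : ℕ → ι → ℝ} {δ α : ℕ → ℝ} {t T : ℕ}

lemma of_recursion (hr0 : r 0 = H *ᵥ (xs - x 0))
    (hr : ∀ t, r (t + 1) = r t - α t • H *ᵥ p t) (hδ : ∀ t, δ t = r t ⬝ᵥ P *ᵥ r t)
    (hα : ∀ t, α t = δ t / (p t ⬝ᵥ H *ᵥ p t)) (hp0 : p 0 = P *ᵥ r 0)
    (hp : ∀ t, p (t + 1) = P *ᵥ r (t + 1) + (δ (t + 1) / δ t) • p t)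
    (hx : ∀ t, x (t + 1) = x t + α t • p t) : IsPCG H P xs x r p δ α where
  residual_eq t := by
    induction t with
    | zero => exact hr0
    | succ t ih => rw [hr, ih, hx, ← mulVec_smul, ← mulVec_sub, sub_add_eq_sub_sub]
  decrement_eq := hδ
  stepSize_eq := hα
  dir_zero := hp0
  dir_succ := hp
  iterate_succ := hx

lemma residual_succ (h : IsPCG H P xs x r p δ α) (t : ℕ) :
    r (t + 1) = r t - α t • H *ᵥ p t := by
  rw [h.residual_eq, h.residual_eq, h.iterate_succ, ← mulVec_smul, ← mulVec_sub]
  congr 1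
  abel

lemma precond_residual_succ (h : IsPCG H P xs x r p δ α) (t : ℕ) :
    P *ᵥ r (t + 1) = p (t + 1) - (δ (t + 1) / δ t) • p t := by
  rw [h.dir_succ, add_sub_cancel_right]

lemma stepSize_ne_zero (h : IsPCG H P xs x r p δ α)
    (hwell : ∀ s < T, δ s ≠ 0 ∧ p s ⬝ᵥ H *ᵥ p s ≠ 0) (ht : t < T) : α t ≠ 0 := by
  rw [h.stepSize_eq]
  exact div_ne_zero (hwell t ht).1 (hwell t ht).2

lemma mulVec_dir (h : IsPCG H P xs x r p δ α) (hα : α t ≠ 0) :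
    H *ᵥ p t = (α t)⁻¹ • (r t - r (t + 1)) := by
  rw [h.residual_succ, sub_sub_cancel, smul_smul, inv_mul_cancel₀ hα, one_smul]

lemma precond_residual_mem_span (h : IsPCG H P xs x r p δ α) (t : ℕ) :
    P *ᵥ r t ∈ Submodule.span ℝ (p '' Set.Iio (t + 1)) := by
  have hmem : ∀ j ≤ t, p j ∈ Submodule.span ℝ (p '' Set.Iio (t + 1)) := fun j hj =>
    Submodule.subset_span (Set.mem_image_of_mem p (Nat.lt_succ_of_le hj))
  cases t with
  | zero => exact h.dir_zero ▸ hmem 0 le_rfl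
  | succ t =>
    rw [h.precond_residual_succ]
    exact sub_mem (hmem _ le_rfl) (Submodule.smul_mem _ _ (hmem t (Nat.le_succ t)))

lemma residual_dot_dir_self (h : IsPCG H P xs x r p δ α) (hprev : ∀ j < t, r t ⬝ᵥ p j = 0) :
    r t ⬝ᵥ p t = δ t := by
  cases t with
  | zero => rw [h.dir_zero, h.decrement_eq]
  | succ t =>
    rw [h.dir_succ, dotProduct_add, dotProduct_smul, hprev t (Nat.lt_succ_self t), smul_zero,
      add_zero, h.decrement_eq]

lemma orthogonal_succ (h : IsPCG H P xs x r p δ α) (hH : H.IsSymm) (hP : P.IsSymm)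
    (hwell : ∀ s < T, δ s ≠ 0 ∧ p s ⬝ᵥ H *ᵥ p s ≠ 0) (ht : t < T)
    (ih : ∀ j < t, p t ⬝ᵥ H *ᵥ p j = 0 ∧ r t ⬝ᵥ p j = 0) :
    ∀ j < t + 1, p (t + 1) ⬝ᵥ H *ᵥ p j = 0 ∧ r (t + 1) ⬝ᵥ p j = 0 := by
  have hα := h.stepSize_ne_zero hwell ht
  have hr : ∀ j < t + 1, r (t + 1) ⬝ᵥ p j = 0 := by
    intro j hj
    rw [h.residual_succ, sub_dotProduct, smul_dotProduct, hH.mulVec_dotProduct]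
    rcases Nat.lt_succ_iff_lt_or_eq.mp hj with hj | rfl
    · rw [(ih j hj).1, (ih j hj).2, smul_zero, sub_zero]
    · rw [h.residual_dot_dir_self fun i hi => (ih i hi).2, h.stepSize_eq, smul_eq_mul,
        div_mul_cancel₀ _ (hwell j ht).2, sub_self]
  have hPr : ∀ j < t + 1, r (t + 1) ⬝ᵥ P *ᵥ r j = 0 := fun j hj =>
    dotProduct_eq_zero_of_mem_span (by rintro _ ⟨i, hi, rfl⟩; exact hr i (by
      simp only [Set.mem_Iio] at hi; omega)) (h.precond_residual_mem_span j)
  refine fun j hj => ⟨?_, hr j hj⟩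
  have hαj := h.stepSize_ne_zero hwell (lt_of_le_of_lt (Nat.lt_succ_iff.mp hj) ht)
  have hPHp : r (t + 1) ⬝ᵥ P *ᵥ H *ᵥ p j =
      (α j)⁻¹ * (r (t + 1) ⬝ᵥ P *ᵥ r j - r (t + 1) ⬝ᵥ P *ᵥ r (j + 1)) := by
    rw [h.mulVec_dir hαj, mulVec_smul, mulVec_sub, dotProduct_smul, dotProduct_sub, smul_eq_mul]
  rw [h.dir_succ, add_dotProduct, hP.mulVec_dotProduct, hPHp, hPr j hj, smul_dotProduct]
  rcases Nat.lt_succ_iff_lt_or_eq.mp hj with hj | rfl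
  · rw [hPr (j + 1) (by omega), (ih j hj).1, sub_zero, mul_zero, smul_zero, add_zero]
  · rw [← h.decrement_eq, h.stepSize_eq, inv_div, smul_eq_mul]
    ring

lemma orthogonal (h : IsPCG H P xs x r p δ α) (hH : H.IsSymm) (hP : P.IsSymm)
    (hwell : ∀ s < T, δ s ≠ 0 ∧ p s ⬝ᵥ H *ᵥ p s ≠ 0) :
    ∀ t ≤ T, ∀ j < t, p t ⬝ᵥ H *ᵥ p j = 0 ∧ r t ⬝ᵥ p j = 0 := by
  intro t
  induction t with
  | zero => intro _ j hj; exact absurd hj (Nat.not_lt_zero j)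
  | succ t ih => exact fun ht => h.orthogonal_succ hH hP hwell ht (ih (Nat.le_of_succ_le ht))

lemma residual_dot_eq_zero_of_mem_span (h : IsPCG H P xs x r p δ α) (hH : H.IsSymm)
    (hP : P.IsSymm) (hwell : ∀ s < T, δ s ≠ 0 ∧ p s ⬝ᵥ H *ᵥ p s ≠ 0) (ht : t ≤ T) {u : ι → ℝ}
    (hu : u ∈ Submodule.span ℝ (p '' Set.Iio t)) : r t ⬝ᵥ u = 0 :=
  dotProduct_eq_zero_of_mem_span
    (by rintro _ ⟨j, hj, rfl⟩; exact (h.orthogonal hH hP hwell t ht j hj).2) hu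

lemma sub_mem_span_dir (h : IsPCG H P xs x r p δ α) (t : ℕ) :
    x t - x 0 ∈ Submodule.span ℝ (p '' Set.Iio t) := by
  induction t with
  | zero => simp
  | succ t ih =>
    rw [h.iterate_succ, add_sub_right_comm]
    exact add_mem (span_image_Iio_mono p t.le_succ ih)
      (Submodule.smul_mem _ _ (Submodule.subset_span (Set.mem_image_of_mem p t.lt_succ_self)))

lemma dir_mem_map_of_residual_mem (h : IsPCG H P xs x r p δ α) {N : Submodule ℝ (ι → ℝ)}
    (hN : ∀ s ≤ t, r s ∈ N) : p t ∈ N.map (mulVecLin P) := by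
  induction t with
  | zero => exact h.dir_zero ▸ Submodule.mem_map_of_mem (hN 0 le_rfl)
  | succ t ih =>
    rw [h.dir_succ]
    exact add_mem (Submodule.mem_map_of_mem (hN _ le_rfl))
      (Submodule.smul_mem _ _ (ih fun s hs => hN s (Nat.le_succ_of_le hs)))

lemma sub_mem_map_of_residual_mem (h : IsPCG H P xs x r p δ α) {N : Submodule ℝ (ι → ℝ)}
    (hN : ∀ s < t, r s ∈ N) : x t - x 0 ∈ N.map (mulVecLin P) := by
  refine Submodule.span_le.mpr ?_ (h.sub_mem_span_dir t)
  rintro _ ⟨j, hj, rfl⟩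
  exact h.dir_mem_map_of_residual_mem fun s hs => hN s (lt_of_le_of_lt hs hj)

lemma energy_le (h : IsPCG H P xs x r p δ α) (hH : H.PosSemidef) (hP : P.IsSymm)
    (hwell : ∀ s < T, δ s ≠ 0 ∧ p s ⬝ᵥ H *ᵥ p s ≠ 0) (ht : t ≤ T) {u : ι → ℝ}
    (hu : u ∈ Submodule.span ℝ (p '' Set.Iio t)) :
    (x t - xs) ⬝ᵥ H *ᵥ (x t - xs) ≤ (x t - xs + u) ⬝ᵥ H *ᵥ (x t - xs + u) := by
  have hHs : H.IsSymm := isHermitian_iff_isSymm.mp hH.isHermitian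
  have hcross : u ⬝ᵥ H *ᵥ (x t - xs) = 0 := by
    rw [← neg_sub, mulVec_neg, ← h.residual_eq, dotProduct_neg, dotProduct_comm,
      h.residual_dot_eq_zero_of_mem_span hHs hP hwell ht hu, neg_zero]
  have hu0 : 0 ≤ u ⬝ᵥ H *ᵥ u := by simpa using hH.dotProduct_mulVec_nonneg u
  have hsymm : (x t - xs) ⬝ᵥ H *ᵥ u = u ⬝ᵥ H *ᵥ (x t - xs) := by
    rw [← hHs.mulVec_dotProduct, dotProduct_comm]
  rw [mulVec_add, dotProduct_add, add_dotProduct, add_dotProduct, hsymm, hcross]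
  linarith

lemma mulVec_mem_span_dir_succ (h : IsPCG H P xs x r p δ α)
    (hwell : ∀ s < T, δ s ≠ 0 ∧ p s ⬝ᵥ H *ᵥ p s ≠ 0) (ht : t ≤ T) {w : ι → ℝ}
    (hw : w ∈ Submodule.span ℝ (p '' Set.Iio t)) :
    (P * H) *ᵥ w ∈ Submodule.span ℝ (p '' Set.Iio (t + 1)) := by
  induction hw using Submodule.span_induction with
  | mem w hw =>
    obtain ⟨j, hj, rfl⟩ := hw
    have hj : j < t := hj
    rw [← mulVec_mulVec, h.mulVec_dir (h.stepSize_ne_zero hwell (lt_of_lt_of_le hj ht)),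
      mulVec_smul, mulVec_sub]
    exact Submodule.smul_mem _ _ (sub_mem (span_image_Iio_mono p (by omega)
      (h.precond_residual_mem_span j)) (span_image_Iio_mono p (by omega)
      (h.precond_residual_mem_span (j + 1))))
  | zero => rw [mulVec_zero]; exact zero_mem _
  | add u w _ _ hu hw => rw [mulVec_add]; exact add_mem hu hw
  | smul c u _ hu => rw [mulVec_smul]; exact Submodule.smul_mem _ c hu

variable [DecidableEq ι]

lemma span_dir_le_krylov (h : IsPCG H P xs x r p δ α) (t : ℕ) :
    Submodule.span ℝ (p '' Set.Iio t) ≤ krylov (P * H) (P *ᵥ r 0) t := by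
  have key : ∀ j, P *ᵥ r j ∈ krylov (P * H) (P *ᵥ r 0) (j + 1) ∧
      p j ∈ krylov (P * H) (P *ᵥ r 0) (j + 1) := by
    intro j
    induction j with
    | zero =>
      have hz := pow_mulVec_mem_krylov (M := P * H) (z := P *ᵥ r 0) (Nat.zero_lt_one)
      rw [pow_zero, one_mulVec] at hz
      exact ⟨hz, h.dir_zero ▸ hz⟩
    | succ j ih =>
      have hPr : P *ᵥ r (j + 1) ∈ krylov (P * H) (P *ᵥ r 0) (j + 2) := by
        rw [h.residual_succ, mulVec_sub, mulVec_smul, mulVec_mulVec]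
        exact sub_mem (krylov_mono (by omega) ih.1)
          (Submodule.smul_mem _ _ (mulVec_mem_krylov_succ ih.2))
      refine ⟨hPr, h.dir_succ j ▸ add_mem hPr (Submodule.smul_mem _ _ ?_)⟩
      exact krylov_mono (by omega) ih.2
  rw [Submodule.span_le]
  rintro _ ⟨j, hj, rfl⟩
  exact krylov_mono (Nat.succ_le_of_lt hj) (key j).2

lemma krylov_le_span_dir (h : IsPCG H P xs x r p δ α)
    (hwell : ∀ s < T, δ s ≠ 0 ∧ p s ⬝ᵥ H *ᵥ p s ≠ 0) (ht : t ≤ T) :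
    krylov (P * H) (P *ᵥ r 0) t ≤ Submodule.span ℝ (p '' Set.Iio t) := by
  have key : ∀ i < T, ((P * H) ^ i) *ᵥ (P *ᵥ r 0) ∈ Submodule.span ℝ (p '' Set.Iio (i + 1)) := by
    intro i
    induction i with
    | zero => intro _; rw [pow_zero, one_mulVec]; exact h.precond_residual_mem_span 0
    | succ i ih =>
      intro hi
      rw [pow_succ', ← mulVec_mulVec]
      exact h.mulVec_mem_span_dir_succ hwell hi.le (ih (by omega))
  rw [krylov, Submodule.span_le]
  rintro _ ⟨i, hi, rfl⟩
  exact span_image_Iio_mono p (Nat.succ_le_of_lt hi) (key i (lt_of_lt_of_le hi ht))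

lemma span_dir_eq_krylov (h : IsPCG H P xs x r p δ α)
    (hwell : ∀ s < T, δ s ≠ 0 ∧ p s ⬝ᵥ H *ᵥ p s ≠ 0) (ht : t ≤ T) :
    Submodule.span ℝ (p '' Set.Iio t) = krylov (P * H) ((P * H) *ᵥ (x 0 - xs)) t := by
  rw [← krylov_neg, ← mulVec_neg, neg_sub, ← mulVec_mulVec, ← h.residual_eq]
  exact le_antisymm (h.span_dir_le_krylov t) (h.krylov_le_span_dir hwell ht)

theorem isLeast_energy (h : IsPCG H P xs x r p δ α) (hH : H.PosSemidef) (hP : P.IsSymm)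
    (hwell : ∀ s < T, δ s ≠ 0 ∧ p s ⬝ᵥ H *ᵥ p s ≠ 0) (ht : t ≤ T) :
    IsLeast {y | ∃ Q : ℝ[X], Q.natDegree ≤ t ∧ Q.eval 0 = 1 ∧
        y = 1 / 2 * (aeval (P * H) Q *ᵥ (x 0 - xs) ⬝ᵥ H *ᵥ (aeval (P * H) Q *ᵥ (x 0 - xs)))}
      (1 / 2 * ((x t - xs) ⬝ᵥ H *ᵥ (x t - xs))) := by
  have hK := h.span_dir_eq_krylov hwell ht
  refine ⟨?_, ?_⟩
  · obtain ⟨Q, hQ, hQ0, hQe⟩ := exists_aeval_mulVec_eq_of_mem_krylov (hK ▸ h.sub_mem_span_dir t)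
    refine ⟨Q, hQ, hQ0, ?_⟩
    rw [hQe, sub_add_sub_cancel']
  · rintro _ ⟨Q, hQ, hQ0, rfl⟩
    have hu : aeval (P * H) Q *ᵥ (x 0 - xs) - (x t - xs) ∈ Submodule.span ℝ (p '' Set.Iio t) := by
      convert sub_mem (hK ▸ aeval_mulVec_sub_mem_krylov hQ hQ0 (x 0 - xs))
        (h.sub_mem_span_dir t) using 1
      abel
    have := h.energy_le hH hP hwell ht hu
    rw [add_sub_cancel] at this
    linarith

end IsPCG

end PCG

lemma msqrt_eq_cfc {d : ℕ} {M : Matrix (Fin d) (Fin d) ℝ} (hM : M.PosSemidef) :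
    msqrt M = cfc Real.sqrt M := by
  rw [msqrt, dif_pos hM, hM.isHermitian.cfc_eq, IsHermitian.cfc, Unitary.conjStarAlgAut_apply]
  rfl

lemma msqrt_mul_self {d : ℕ} {M : Matrix (Fin d) (Fin d) ℝ} (hM : M.PosSemidef) :
    msqrt M * msqrt M = M := by
  rw [msqrt_eq_cfc hM, ← cfc_mul Real.sqrt Real.sqrt M]
  conv_rhs => rw [← cfc_id (R := ℝ) M hM.isHermitian.isSelfAdjoint]
  refine cfc_congr fun x hx => Real.mul_self_sqrt ?_
  obtain ⟨i, rfl⟩ := hM.isHermitian.spectrum_real_eq_range_eigenvalues ▸ hx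
  exact hM.eigenvalues_nonneg i

lemma isSymm_msqrt {d : ℕ} {M : Matrix (Fin d) (Fin d) ℝ} (hM : M.PosSemidef) :
    (msqrt M).IsSymm := by
  rw [msqrt_eq_cfc hM, ← isHermitian_iff_isSymm]
  exact cfc_predicate _ _

lemma isUnit_det_msqrt {d : ℕ} {M : Matrix (Fin d) (Fin d) ℝ} (hM : M.PosDef) :
    IsUnit (msqrt M).det := by
  have hdet := isUnit_iff_ne_zero.mpr hM.det_pos.ne'
  rw [← msqrt_mul_self hM.posSemidef, det_mul] at hdet
  exact isUnit_of_mul_isUnit_left hdet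

lemma posDef_transpose_mul_self_add_smul {κ ι : Type*} [Fintype κ] [Fintype ι] [DecidableEq ι]
    (B : Matrix κ ι ℝ) {Λ : Matrix ι ι ℝ} (hΛ : (Λ - 1).PosSemidef) {ν : ℝ} (hν : ν ≠ 0) :
    (Bᵀ * B + ν ^ 2 • Λ).PosDef := by
  have hΛ' : Λ.PosDef := by simpa using PosDef.one.add_posSemidef hΛ
  have hB := posSemidef_conjTranspose_mul_self B
  rw [conjTranspose_eq_transpose_of_trivial] at hB
  exact PosDef.posSemidef_add hB (hΛ'.smul (by positivity))

section SketchedHessian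

variable {n d m : ℕ} (A : Matrix (Fin n) (Fin d) ℝ) {Λ : Matrix (Fin d) (Fin d) ℝ} {ν : ℝ}
  (S : Matrix (Fin m) (Fin n) ℝ)

lemma posDef_Hmat (hΛ : (Λ - 1).PosSemidef) (hν : ν ≠ 0) : (Hmat A ν Λ).PosDef :=
  posDef_transpose_mul_self_add_smul A hΛ hν

lemma posDef_HSmat (hΛ : (Λ - 1).PosSemidef) (hν : ν ≠ 0) : (HSmat A ν Λ S).PosDef := by
  simpa [HSmat, transpose_mul, Matrix.mul_assoc] using
    posDef_transpose_mul_self_add_smul (S * A) hΛ hν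

lemma Hmat_mulVec_xstar (b : Fin d → ℝ) (hH : (Hmat A ν Λ).PosDef) :
    Hmat A ν Λ *ᵥ xstar A ν Λ b = b := by
  rw [xstar, mulVec_mulVec, mul_nonsing_inv _ (isUnit_iff_ne_zero.mpr hH.det_pos.ne'), one_mulVec]

lemma inv_CSmat (hH : (Hmat A ν Λ).PosDef) :
    (CSmat A ν Λ S)⁻¹ = msqrt (Hmat A ν Λ) * (HSmat A ν Λ S)⁻¹ * msqrt (Hmat A ν Λ) := by
  rw [CSmat, Matrix.mul_inv_rev, Matrix.mul_inv_rev,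
    nonsing_inv_nonsing_inv _ (isUnit_det_msqrt hH), Matrix.mul_assoc]

end SketchedHessian

theorem stmt6_general {n d m : ℕ}
    (A : Matrix (Fin n) (Fin d) ℝ) (b : Fin d → ℝ)
    (Λ : Matrix (Fin d) (Fin d) ℝ)
    (hΛ : (Λ - 1).PosSemidef) (ν : ℝ) (hν : 0 < ν)
    (S : Matrix (Fin m) (Fin n) ℝ)
    -- eigenvalue decomposition `C_S = Σ_i λ_i v_i v_iᵀ`
    (lam : Fin d → ℝ) (v : Fin d → Fin d → ℝ)
    (hortho : ∀ i j, v i ⬝ᵥ v j = if i = j then (1 : ℝ) else 0)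
    (hpos : ∀ i, 0 < lam i)
    (hdecomp : CSmat A ν Λ S = ∑ i, lam i • Matrix.vecMulVec (v i) (v i))
    -- the PCG iteration
    (x r rt p : ℕ → Fin d → ℝ) (dt al : ℕ → ℝ)
    (hr0 : r 0 = b - (Hmat A ν Λ).mulVec (x 0))
    (hrt : ∀ t, rt t = (HSmat A ν Λ S)⁻¹.mulVec (r t))
    (hp0 : p 0 = rt 0)
    (hdt : ∀ t, dt t = r t ⬝ᵥ rt t)
    (hal : ∀ t, al t = dt t / (p t ⬝ᵥ (Hmat A ν Λ).mulVec (p t)))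
    (hxrec : ∀ t, x (t + 1) = x t + al t • p t)
    (hrrec : ∀ t, r (t + 1) = r t - al t • (Hmat A ν Λ).mulVec (p t))
    (hprec : ∀ t, p (t + 1) = rt (t + 1) + (dt (t + 1) / dt t) • p t)
    -- well-definedness up to time `T`
    (T : ℕ)
    (hwell : ∀ s < T, dt s ≠ 0 ∧ p s ⬝ᵥ (Hmat A ν Λ).mulVec (p s) ≠ 0) :
    ∀ t ≤ T,
      (x t - x 0 ∈
        Submodule.map (Matrix.mulVecLin (HSmat A ν Λ S)⁻¹)
          (Submodule.span ℝ {g | ∃ s < t, g = gradf A ν Λ b (x s)})) ∧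
      deltaEx A ν Λ b (x t) =
        sInf {y : ℝ | ∃ Q : Polynomial ℝ, Q.natDegree ≤ t ∧ Q.eval 0 = 1 ∧
          y = (1 / 2) * ∑ i, (Q.eval (lam i)⁻¹) ^ 2 *
            (v i ⬝ᵥ (msqrt (Hmat A ν Λ)).mulVec (x 0 - xstar A ν Λ b)) ^ 2} := by
  have hH := posDef_Hmat A hΛ hν.ne'
  have hHxs := Hmat_mulVec_xstar A b hH
  have hpcg : IsPCG (Hmat A ν Λ) (HSmat A ν Λ S)⁻¹ (xstar A ν Λ b) x r p dt al :=
    .of_recursion (by rw [hr0, mulVec_sub, hHxs]) hrrec (fun t => by rw [hdt, hrt]) hal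
      (by rw [hp0, hrt]) (fun t => by rw [hprec, hrt]) hxrec
  have hRPR : msqrt (Hmat A ν Λ) * (HSmat A ν Λ S)⁻¹ * msqrt (Hmat A ν Λ) =
      ∑ i, (lam i)⁻¹ • vecMulVec (v i) (v i) := by
    rw [← inv_CSmat A S hH, hdecomp, inv_sum_smul_vecMulVec hortho fun i => (hpos i).ne']
  intro t ht
  refine ⟨hpcg.sub_mem_map_of_residual_mem fun s hs => ?_, ?_⟩
  · rw [hpcg.residual_eq, mulVec_sub, hHxs, ← neg_sub]
    exact neg_mem (Submodule.subset_span ⟨s, hs, rfl⟩)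
  · simp_rw [← aeval_mulVec_dotProduct_eq_sum (msqrt_mul_self hH.posSemidef)
      (isSymm_msqrt hH.posSemidef) hortho hRPR]
    have hP := isHermitian_iff_isSymm.mp (posDef_HSmat A S hΛ hν.ne').inv.isHermitian
    exact (hpcg.isLeast_energy hH.posSemidef hP hwell ht).csInf_eq.symm

/-- PCG is a preconditioned first-order method and is optimal:
`x_t - x_0 ∈ H_S⁻¹·span{∇f(x_0),…,∇f(x_{t-1})}` and
`δ_{x_t} = (1/2)·min_{Q, deg Q ≤ t, Q(0)=1} Σ_i Q(1/λ_i)² ξ_i²`. -/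
theorem stmt6 {n d m : ℕ} (hd : 1 ≤ d) (hdn : d ≤ n)
    (A : Matrix (Fin n) (Fin d) ℝ) (b : Fin d → ℝ)
    (Λ : Matrix (Fin d) (Fin d) ℝ) (hΛdiag : Λ.IsDiag)
    (hΛ : (Λ - 1).PosSemidef) (ν : ℝ) (hν : 0 < ν)
    (S : Matrix (Fin m) (Fin n) ℝ)
    -- eigenvalue decomposition `C_S = Σ_i λ_i v_i v_iᵀ`
    (lam : Fin d → ℝ) (v : Fin d → Fin d → ℝ)
    (hortho : ∀ i j, v i ⬝ᵥ v j = if i = j then (1 : ℝ) else 0)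
    (hpos : ∀ i, 0 < lam i)
    (hdecomp : CSmat A ν Λ S = ∑ i, lam i • Matrix.vecMulVec (v i) (v i))
    -- the PCG iteration
    (x r rt p : ℕ → Fin d → ℝ) (dt al : ℕ → ℝ)
    (hr0 : r 0 = b - (Hmat A ν Λ).mulVec (x 0))
    (hrt : ∀ t, rt t = (HSmat A ν Λ S)⁻¹.mulVec (r t))
    (hp0 : p 0 = rt 0)
    (hdt : ∀ t, dt t = r t ⬝ᵥ rt t)
    (hal : ∀ t, al t = dt t / (p t ⬝ᵥ (Hmat A ν Λ).mulVec (p t)))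
    (hxrec : ∀ t, x (t + 1) = x t + al t • p t)
    (hrrec : ∀ t, r (t + 1) = r t - al t • (Hmat A ν Λ).mulVec (p t))
    (hprec : ∀ t, p (t + 1) = rt (t + 1) + (dt (t + 1) / dt t) • p t)
    -- well-definedness up to time `T`
    (T : ℕ) (hT : 1 ≤ T)
    (hwell : ∀ s < T, dt s ≠ 0 ∧ p s ⬝ᵥ (Hmat A ν Λ).mulVec (p s) ≠ 0) :
    ∀ t ≤ T,
      (x t - x 0 ∈
        Submodule.map (Matrix.mulVecLin (HSmat A ν Λ S)⁻¹)
          (Submodule.span ℝ {g | ∃ s < t, g = gradf A ν Λ b (x s)})) ∧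
      deltaEx A ν Λ b (x t) =
        sInf {y : ℝ | ∃ Q : Polynomial ℝ, Q.natDegree ≤ t ∧ Q.eval 0 = 1 ∧
          y = (1 / 2) * ∑ i, (Q.eval (lam i)⁻¹) ^ 2 *
            (v i ⬝ᵥ (msqrt (Hmat A ν Λ)).mulVec (x 0 - xstar A ν Λ b)) ^ 2} :=
  stmt6_general A b Λ hΛ ν hν S lam v hortho hpos hdecomp x r rt p dt al hr0 hrt hp0 hdt hal hxrec
    hrrec hprec T hwell
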